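/- arXiv:0909.5347 — 2 statements merged into one kernel-verified Lean document; each statement's English description precedes it below -/
import Mathlib

section
/- If E_A is a primitive quantum channel (i.e., there exists n such that E_A^n(|φ⟩⟨φ|) is full rank for every unit vector φ), then E_A^m is primitive for every m ∈ ℕ, and H_n(A,φ) = ℂ^D for all n ≥ q(E_A) and all unit vectors φ. -/
/-!
Writing `W_w = A_{w 0} ⋯ A_{w (n-1)}`, one has `E_A^n(|φ⟩⟨φ|) = ∑_w |W_w φ⟩⟨W_w φ|`, and such a sum
of rank-one terms is positive definite exactly when the vectors `W_w φ` span `ℂ^D`, i.e. when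
`H_n(A,φ) = ℂ^D`. Appending a letter gives `H_n(A, A_k φ) ⊆ H_{n+1}(A,φ)`, and trace
preservation `∑ A_k† A_k = 1` provides a `k` with `A_k φ ≠ 0`; so once `E_A^n` maps every pure
state to a full-rank state, so does every later power. Both claims follow by applying this at
`m N ≥ N`, where `N` witnesses primitivity, and at `q(E_A)`.
-/

open Matrix
open scoped ComplexOrder

variable {D : ℕ} {ι : Type*} [Fintype ι]

/-- The completely positive map with Kraus operators `A k`. -/
noncomputable def krausMap (A : ι → Matrix (Fin D) (Fin D) ℂ)
    (X : Matrix (Fin D) (Fin D) ℂ) : Matrix (Fin D) (Fin D) ℂ :=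
  ∑ k, A k * X * (A k)ᴴ

/-- The product `A_{w 0} * A_{w 1} * ⋯ * A_{w (n-1)}` of Kraus operators along a word `w`. -/
noncomputable def wordProd (A : ι → Matrix (Fin D) (Fin D) ℂ) {n : ℕ} (w : Fin n → ι) :
    Matrix (Fin D) (Fin D) ℂ :=
  (List.ofFn fun i => A (w i)).prod

/-- `S_n(A)`: the span of all products of exactly `n` Kraus operators. -/
noncomputable def krausSpan (A : ι → Matrix (Fin D) (Fin D) ℂ) (n : ℕ) :
    Submodule ℂ (Matrix (Fin D) (Fin D) ℂ) :=
  Submodule.span ℂ {M | ∃ w : Fin n → ι, M = wordProd A w}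

/-- `H_n(A,φ) = S_n(A)|φ⟩`. -/
noncomputable def krausVecSpan (A : ι → Matrix (Fin D) (Fin D) ℂ) (n : ℕ)
    (φ : Fin D → ℂ) : Submodule ℂ (Fin D → ℂ) :=
  Submodule.span ℂ {v | ∃ w : Fin n → ι, v = wordProd A w *ᵥ φ}

/-- A quantum channel is primitive if some power maps every pure state to a
positive definite (full-rank) operator. -/
def Primitive (A : ι → Matrix (Fin D) (Fin D) ℂ) : Prop :=
  ∃ n, ∀ φ : Fin D → ℂ, φ ≠ 0 →
    ((krausMap A)^[n] (vecMulVec φ (star φ))).PosDef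

/-- `q(E_A)`: the quantum index of primitivity. -/
noncomputable def qIndex (A : ι → Matrix (Fin D) (Fin D) ℂ) : ℕ :=
  sInf {n | ∀ φ : Fin D → ℂ, φ ≠ 0 →
    ((krausMap A)^[n] (vecMulVec φ (star φ))).PosDef}

/-- `i(A)`: the minimal `n` with `S_n(A) = M_D`. -/
noncomputable def iIndex (A : ι → Matrix (Fin D) (Fin D) ℂ) : ℕ :=
  sInf {n | krausSpan A n = ⊤}

/-- Trace preservation, `∑ k, A_k† A_k = 1`. -/
def TracePreserving (A : ι → Matrix (Fin D) (Fin D) ℂ) : Prop :=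
  ∑ k, (A k)ᴴ * A k = 1

namespace Matrix

variable {R 𝕜 n κ : Type*} [Fintype n] [Fintype κ]

theorem sum_vecMulVec_mulVec [CommSemiring R] (u w : κ → n → R) (x : n → R) :
    (∑ i, vecMulVec (u i) (w i)) *ᵥ x = ∑ i, (w i ⬝ᵥ x) • u i := by
  simp only [sum_mulVec, vecMulVec_mulVec, op_smul_eq_smul]

variable [RCLike 𝕜] [DecidableEq n]

theorem posDef_sum_vecMulVec_iff (v : κ → n → 𝕜) :
    (∑ i, vecMulVec (v i) (star (v i))).PosDef ↔ Submodule.span 𝕜 (Set.range v) = ⊤ := by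
  set M := ∑ i, vecMulVec (v i) (star (v i))
  have hMx (x : n → 𝕜) : M *ᵥ x ∈ Submodule.span 𝕜 (Set.range v) := by
    rw [sum_vecMulVec_mulVec]
    exact Submodule.sum_mem _ fun i _ => Submodule.smul_mem _ _ (Submodule.subset_span ⟨i, rfl⟩)
  constructor
  · intro hM
    refine Submodule.eq_top_iff'.2 fun x => ?_
    have hdet : IsUnit M.det := (isUnit_iff_isUnit_det M).1 hM.isUnit
    simpa [mulVec_mulVec, M.mul_nonsing_inv hdet] using hMx (M⁻¹ *ᵥ x)
  · intro hv
    have hPSD : M.PosSemidef := posSemidef_sum _ fun i _ => posSemidef_vecMulVec_self_star (v i)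
    refine PosDef.of_dotProduct_mulVec_pos hPSD.isHermitian fun x hx => ?_
    have hquad : star x ⬝ᵥ (M *ᵥ x) = ∑ i, star (star (v i) ⬝ᵥ x) * (star (v i) ⬝ᵥ x) := by
      simp only [M, sum_vecMulVec_mulVec, dotProduct_sum, dotProduct_smul, smul_eq_mul]
      exact Finset.sum_congr rfl fun i _ => by rw [star_dotProduct x, mul_comm]
    obtain ⟨i, hi⟩ : ∃ i, star (v i) ⬝ᵥ x ≠ 0 := by
      by_contra! h
      have hx0 : dotProductEquiv 𝕜 n (star x) = 0 :=
        LinearMap.ext_on_range hv fun i => by simp [star_dotProduct x, h i]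
      exact hx (dotProduct_star_self_eq_zero.1 (LinearMap.congr_fun hx0 x))
    rw [hquad]
    exact Finset.sum_pos' (fun i _ => star_mul_self_nonneg _)
      ⟨i, Finset.mem_univ _, star_mul_self_pos (.of_ne_zero hi)⟩

end Matrix

theorem wordProd_snoc {ι : Type*} (A : ι → Matrix (Fin D) (Fin D) ℂ) {n : ℕ} (w : Fin n → ι)
    (k : ι) :
    wordProd A (Fin.snoc w k) = wordProd A w * A k := by
  simp only [wordProd, List.ofFn_succ', List.prod_concat, Fin.snoc_castSucc, Fin.snoc_last]

theorem krausMap_iterate_apply (A : ι → Matrix (Fin D) (Fin D) ℂ) (n : ℕ)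
    (X : Matrix (Fin D) (Fin D) ℂ) :
    (krausMap A)^[n] X = ∑ w : Fin n → ι, wordProd A w * X * (wordProd A w)ᴴ := by
  induction n generalizing X with
  | zero => simp [wordProd]
  | succ n ih =>
    rw [Function.iterate_succ_apply, ih, ← (Fin.snocEquiv fun _ => ι).sum_comp,
      Fintype.sum_prod_type_right]
    refine Finset.sum_congr rfl fun w _ => ?_
    simp only [krausMap, Finset.mul_sum, Finset.sum_mul]
    refine Finset.sum_congr rfl fun k _ => ?_
    change _ = wordProd A (Fin.snoc w k) * X * (wordProd A (Fin.snoc w k))ᴴ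
    simp only [wordProd_snoc, conjTranspose_mul, Matrix.mul_assoc]

theorem krausMap_iterate_vecMulVec (A : ι → Matrix (Fin D) (Fin D) ℂ) (n : ℕ) (φ : Fin D → ℂ) :
    (krausMap A)^[n] (vecMulVec φ (star φ)) =
      ∑ w : Fin n → ι, vecMulVec (wordProd A w *ᵥ φ) (star (wordProd A w *ᵥ φ)) := by
  simp only [krausMap_iterate_apply, mul_vecMulVec, vecMulVec_mul, star_mulVec]

theorem posDef_krausMap_iterate_iff (A : ι → Matrix (Fin D) (Fin D) ℂ) (n : ℕ)
    (φ : Fin D → ℂ) :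
    ((krausMap A)^[n] (vecMulVec φ (star φ))).PosDef ↔ krausVecSpan A n φ = ⊤ := by
  rw [krausMap_iterate_vecMulVec, posDef_sum_vecMulVec_iff]
  simp only [krausVecSpan, Set.range, eq_comm]

theorem krausVecSpan_mulVec_le_succ {ι : Type*} (A : ι → Matrix (Fin D) (Fin D) ℂ) (n : ℕ)
    (k : ι) (φ : Fin D → ℂ) : krausVecSpan A n (A k *ᵥ φ) ≤ krausVecSpan A (n + 1) φ := by
  refine Submodule.span_le.2 ?_
  rintro _ ⟨w, rfl⟩
  exact Submodule.subset_span ⟨Fin.snoc w k, by rw [wordProd_snoc, mulVec_mulVec]⟩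

theorem TracePreserving.exists_mulVec_ne_zero {A : ι → Matrix (Fin D) (Fin D) ℂ}
    (hTP : TracePreserving A) {φ : Fin D → ℂ} (hφ : φ ≠ 0) : ∃ k, A k *ᵥ φ ≠ 0 := by
  by_contra! h
  apply hφ
  calc φ = (∑ k, (A k)ᴴ * A k) *ᵥ φ := by rw [hTP, one_mulVec]
    _ = 0 := by simp [sum_mulVec, ← mulVec_mulVec, h]

def IsPrimitiveAt (A : ι → Matrix (Fin D) (Fin D) ℂ) (n : ℕ) : Prop :=
  ∀ φ : Fin D → ℂ, φ ≠ 0 → ((krausMap A)^[n] (vecMulVec φ (star φ))).PosDef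

theorem isPrimitiveAt_iff {A : ι → Matrix (Fin D) (Fin D) ℂ} {n : ℕ} :
    IsPrimitiveAt A n ↔ ∀ φ : Fin D → ℂ, φ ≠ 0 → krausVecSpan A n φ = ⊤ :=
  forall₂_congr fun φ _ => posDef_krausMap_iterate_iff A n φ

theorem Primitive.isPrimitiveAt_qIndex {A : ι → Matrix (Fin D) (Fin D) ℂ} (h : Primitive A) :
    IsPrimitiveAt A (qIndex A) :=
  Nat.sInf_mem h

theorem TracePreserving.isPrimitiveAt_succ {A : ι → Matrix (Fin D) (Fin D) ℂ}
    (hTP : TracePreserving A) {n : ℕ} (h : IsPrimitiveAt A n) : IsPrimitiveAt A (n + 1) := by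
  rw [isPrimitiveAt_iff] at h ⊢
  intro φ hφ
  obtain ⟨k, hk⟩ := hTP.exists_mulVec_ne_zero hφ
  exact top_unique ((h _ hk).symm.trans_le (krausVecSpan_mulVec_le_succ A n k φ))

theorem TracePreserving.isPrimitiveAt_mono {A : ι → Matrix (Fin D) (Fin D) ℂ}
    (hTP : TracePreserving A) {n m : ℕ} (hnm : n ≤ m) (h : IsPrimitiveAt A n) :
    IsPrimitiveAt A m :=
  Nat.le_induction h (fun _ _ => hTP.isPrimitiveAt_succ) m hnm

theorem stmt4 (D : ℕ) {ι : Type*} [Fintype ι] (A : ι → Matrix (Fin D) (Fin D) ℂ)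
    (hTP : TracePreserving A) (hprim : Primitive A) :
    (∀ m : ℕ, 0 < m → ∃ n, ∀ φ : Fin D → ℂ, φ ≠ 0 →
        (((krausMap A)^[m])^[n] (vecMulVec φ (star φ))).PosDef)
    ∧ ∀ n, qIndex A ≤ n → ∀ φ : Fin D → ℂ, φ ≠ 0 → krausVecSpan A n φ = ⊤ := by
  refine ⟨fun m hm => ?_, fun n hn => ?_⟩
  · obtain ⟨N, hN⟩ := hprim
    refine ⟨N, ?_⟩
    simp only [← Function.iterate_mul]
    exact hTP.isPrimitiveAt_mono (Nat.le_mul_of_pos_left N hm) hN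
  · exact isPrimitiveAt_iff.1 (hTP.isPrimitiveAt_mono hn hprim.isPrimitiveAt_qIndex)
end

section
/- Let A be a primitive stochastic matrix with classical index of primitivity p(A), and let E_A be the associated quantum channel with Kraus operators √(a_{ij})|i⟩⟨j|. Then E_A is primitive and q(E_A) = p(A) = i(A). -/
open Matrix
open scoped ComplexOrder

variable {D : ℕ} {ι : Type*} [Fintype ι]

/-! Each Kraus operator `√a_ij E_ij` sends `e_j` to a multiple of `e_i`, so a product of `n`
of them is a nonzero multiple of `E_ij` exactly along a path of length `n` from `i` to `j` in the
support graph of `a`; such paths exist iff `(a ^ n) i j > 0`, hence `S_n = M_D` iff `a ^ n > 0`.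
Likewise `E_A X` is the diagonal matrix with diagonal `a *ᵥ diag X`, so for `n ≥ 1`
`E_A^n |φ⟩⟨φ|` is diagonal with diagonal `a ^ n *ᵥ |φ|²`, positive definite for every `φ ≠ 0`
iff `a ^ n > 0`. The sets defining the three indices therefore coincide. -/

theorem wordProd_cons {κ : Type*} (A : κ → Matrix (Fin D) (Fin D) ℂ) {n : ℕ} (k : κ)
    (w : Fin n → κ) :
    wordProd A (Fin.cons k w) = A k * wordProd A w := by
  simp [wordProd, List.ofFn_succ]

theorem one_mem_krausSpan_zero {κ : Type*} (A : κ → Matrix (Fin D) (Fin D) ℂ) : 1 ∈ krausSpan A 0 :=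
  Submodule.subset_span ⟨Fin.elim0, by simp [wordProd]⟩

theorem mul_mem_krausSpan_succ {κ : Type*} (A : κ → Matrix (Fin D) (Fin D) ℂ) {n : ℕ} (k : κ)
    {M : Matrix (Fin D) (Fin D) ℂ} (hM : M ∈ krausSpan A n) : A k * M ∈ krausSpan A (n + 1) := by
  refine Submodule.span_induction (p := fun M _ => A k * M ∈ krausSpan A (n + 1)) ?_ ?_ ?_ ?_ hM
  · rintro _ ⟨w, rfl⟩
    exact Submodule.subset_span ⟨Fin.cons k w, (wordProd_cons A k w).symm⟩
  · simp
  · intro x y _ _ hx hy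
    simpa [mul_add] using add_mem hx hy
  · intro c x _ hx
    simpa using Submodule.smul_mem _ c hx

theorem Submodule.eq_top_of_forall_single_mem {m n R : Type*} [Fintype m] [Fintype n]
    [DecidableEq m] [DecidableEq n] [Semiring R] (S : Submodule R (Matrix m n R))
    (h : ∀ i j, single i j 1 ∈ S) : S = ⊤ := by
  refine eq_top_iff.mpr fun M _ => ?_
  rw [matrix_eq_sum_single M]
  refine Submodule.sum_mem _ fun i _ => Submodule.sum_mem _ fun j _ => ?_
  simpa using S.smul_mem (M i j) (h i j)

theorem Matrix.eq_of_one_apply_pos {n R : Type*} [DecidableEq n] [Zero R] [One R] [Preorder R]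
    {i j : n} (h : 0 < (1 : Matrix n n R) i j) : i = j := by
  by_contra hij
  simp [one_apply_ne hij] at h

theorem Matrix.pow_succ_apply_pos_iff {n : Type*} [Fintype n] [DecidableEq n]
    {a : Matrix n n ℝ} (ha : ∀ i j, 0 ≤ a i j) (k : ℕ) (i j : n) :
    0 < (a ^ (k + 1)) i j ↔ ∃ m, 0 < a i m ∧ 0 < (a ^ k) m j := by
  have hpow := pow_apply_nonneg ha k
  rw [pow_succ', mul_apply,
    Finset.sum_pos_iff_of_nonneg fun m _ => mul_nonneg (ha i m) (hpow m j)]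
  simp only [Finset.mem_univ, true_and]
  refine exists_congr fun m => ⟨fun h => ⟨?_, ?_⟩, fun h => mul_pos h.1 h.2⟩
  · exact (ha i m).lt_of_ne' (left_ne_zero_of_mul h.ne')
  · exact (hpow m j).lt_of_ne' (right_ne_zero_of_mul h.ne')

theorem Matrix.mulVec_pos {m n : Type*} [Fintype n] {b : Matrix m n ℝ}
    (hb : ∀ i j, 0 < b i j) {x : n → ℝ} (hx : 0 ≤ x) (hx0 : x ≠ 0) (i : m) :
    0 < (b *ᵥ x) i := by
  obtain ⟨j, hj⟩ := Function.ne_iff.mp hx0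
  exact Finset.sum_pos' (fun l _ => mul_nonneg (hb i l).le (hx l))
    ⟨j, Finset.mem_univ _, mul_pos (hb i j) ((hx j).lt_of_ne' hj)⟩

noncomputable def classicalKraus (a : Matrix (Fin D) (Fin D) ℝ) (k : Fin D × Fin D) :
    Matrix (Fin D) (Fin D) ℂ :=
  (Real.sqrt (a k.1 k.2) : ℂ) • single k.1 k.2 1

section classicalKraus

variable {a : Matrix (Fin D) (Fin D) ℝ}

theorem classicalKraus_mul_conjTranspose (ha : ∀ i j, 0 ≤ a i j) (k : Fin D × Fin D)
    (X : Matrix (Fin D) (Fin D) ℂ) :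
    classicalKraus a k * X * (classicalKraus a k)ᴴ = single k.1 k.1 (a k.1 k.2 * X k.2 k.2) := by
  have hsq : (Real.sqrt (a k.1 k.2) : ℂ) * Real.sqrt (a k.1 k.2) = a k.1 k.2 := by
    exact_mod_cast Real.mul_self_sqrt (ha k.1 k.2)
  simp only [classicalKraus, conjTranspose_single, single_mul_mul_single, Complex.star_def,
    Complex.conj_ofReal, mul_one, smul_single, smul_eq_mul]
  rw [mul_right_comm, hsq]

theorem krausMap_classicalKraus (ha : ∀ i j, 0 ≤ a i j) (X : Matrix (Fin D) (Fin D) ℂ) :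
    krausMap (classicalKraus a) X = diagonal (a.map (↑) *ᵥ X.diag) := by
  simp only [krausMap, classicalKraus_mul_conjTranspose ha, Fintype.sum_prod_type]
  rw [← sum_single_eq_diagonal]
  refine Finset.sum_congr rfl fun i _ => ?_
  simp only [mulVec, dotProduct, map_apply, diag_apply]
  exact (map_sum (singleAddMonoidHom (α := ℂ) i i) _ _).symm

theorem diag_iterate_krausMap_classicalKraus (ha : ∀ i j, 0 ≤ a i j) (n : ℕ)
    (X : Matrix (Fin D) (Fin D) ℂ) :
    ((krausMap (classicalKraus a))^[n] X).diag = (a ^ n).map (↑) *ᵥ X.diag := by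
  induction n with
  | zero => simp
  | succ n ih =>
    rw [Function.iterate_succ_apply', krausMap_classicalKraus ha, diag_diagonal, ih,
      mulVec_mulVec, pow_succ']
    exact congrArg (· *ᵥ X.diag) (Matrix.map_mul (f := Complex.ofRealHom)).symm

theorem iterate_krausMap_classicalKraus_eq_diagonal (ha : ∀ i j, 0 ≤ a i j) {n : ℕ}
    (hpos : ∀ i j, 0 < (a ^ n) i j) (X : Matrix (Fin D) (Fin D) ℂ) :
    (krausMap (classicalKraus a))^[n] X = diagonal ((krausMap (classicalKraus a))^[n] X).diag := by
  cases n with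
  | zero =>
    ext i j
    obtain rfl := eq_of_one_apply_pos (pow_zero a ▸ hpos i j)
    simp
  | succ n =>
    rw [Function.iterate_succ_apply', krausMap_classicalKraus ha, diag_diagonal]

theorem posDef_iterate_krausMap_classicalKraus_iff (ha : ∀ i j, 0 ≤ a i j) (n : ℕ) :
    (∀ φ : Fin D → ℂ, φ ≠ 0 →
        ((krausMap (classicalKraus a))^[n] (vecMulVec φ (star φ))).PosDef) ↔
      ∀ i j, 0 < (a ^ n) i j := by
  constructor
  · intro h i j
    have hdiag : 0 < ((krausMap (classicalKraus a))^[n]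
        (vecMulVec (Pi.single j 1) (star (Pi.single j 1)))).diag i :=
      (h (Pi.single j 1) (by simp)).diag_pos
    rw [diag_iterate_krausMap_classicalKraus ha, diag_vecMulVec] at hdiag
    simpa [← Pi.single_mul, mulVec_single_one] using hdiag
  · intro hpos φ hφ
    rw [iterate_krausMap_classicalKraus_eq_diagonal ha hpos, posDef_diagonal_iff,
      diag_iterate_krausMap_classicalKraus ha]
    intro i
    have hnormSq : (vecMulVec φ (star φ)).diag = fun j => (Complex.normSq (φ j) : ℂ) := by
      ext j
      simp [vecMulVec_apply, Complex.mul_conj]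
    have hnormSq_ne : (fun j => Complex.normSq (φ j)) ≠ 0 := fun h =>
      hφ (funext fun j => Complex.normSq_eq_zero.mp (congrFun h j))
    rw [hnormSq]
    calc (0 : ℂ) < ((a ^ n *ᵥ fun j => Complex.normSq (φ j)) i : ℝ) :=
          Complex.zero_lt_real.mpr
            (mulVec_pos hpos (fun j => Complex.normSq_nonneg (φ j)) hnormSq_ne i)
      _ = _ := RingHom.map_mulVec Complex.ofRealHom _ _ i

theorem classicalKraus_mul_apply (k : Fin D × Fin D) (M : Matrix (Fin D) (Fin D) ℂ)
    (i j : Fin D) :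
    (classicalKraus a k * M) i j = if k.1 = i then Real.sqrt (a i k.2) * M k.2 j else 0 := by
  obtain ⟨p, q⟩ := k
  by_cases hp : p = i
  · subst hp
    simp [classicalKraus]
  · simp [classicalKraus, hp, single_mul_apply_of_ne _ _ _ _ _ (Ne.symm hp)]

theorem classicalKraus_mul_single (i m j : Fin D) :
    classicalKraus a (i, m) * single m j 1 = (Real.sqrt (a i m) : ℂ) • single i j 1 := by
  simp [classicalKraus]

theorem pow_apply_pos_of_wordProd_classicalKraus_apply_ne_zero (ha : ∀ i j, 0 ≤ a i j) {n : ℕ}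
    (w : Fin n → Fin D × Fin D) {i j : Fin D} (h : wordProd (classicalKraus a) w i j ≠ 0) :
    0 < (a ^ n) i j := by
  induction n generalizing i with
  | zero =>
    obtain rfl : i = j := by
      by_contra hij
      simp [wordProd, one_apply_ne hij] at h
    simp
  | succ n ih =>
    rw [← Fin.cons_self_tail w, wordProd_cons, classicalKraus_mul_apply] at h
    split_ifs at h with hi
    · subst hi
      obtain ⟨hsqrt, htail⟩ := mul_ne_zero_iff.mp h
      exact (pow_succ_apply_pos_iff ha n _ j).mpr
        ⟨_, Real.sqrt_ne_zero'.mp (by exact_mod_cast hsqrt), ih (Fin.tail w) htail⟩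
    · exact absurd rfl h

theorem pow_apply_pos_of_krausSpan_classicalKraus_eq_top (ha : ∀ i j, 0 ≤ a i j) {n : ℕ}
    (h : krausSpan (classicalKraus a) n = ⊤) (i j : Fin D) : 0 < (a ^ n) i j := by
  by_contra hnot
  have hker : krausSpan (classicalKraus a) n ≤ LinearMap.ker (entryLinearMap ℂ ℂ i j) := by
    refine Submodule.span_le.mpr ?_
    rintro _ ⟨w, rfl⟩
    by_contra hw
    exact hnot (pow_apply_pos_of_wordProd_classicalKraus_apply_ne_zero ha w hw)
  have hsingle : single i j (1 : ℂ) ∈ LinearMap.ker (entryLinearMap ℂ ℂ i j) :=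
    hker (h ▸ Submodule.mem_top)
  simp at hsingle

theorem single_mem_krausSpan_classicalKraus (ha : ∀ i j, 0 ≤ a i j) {n : ℕ} {i j : Fin D}
    (h : 0 < (a ^ (n + 1)) i j) : single i j 1 ∈ krausSpan (classicalKraus a) (n + 1) := by
  induction n generalizing i with
  | zero =>
    have hmem := mul_mem_krausSpan_succ (classicalKraus a) (i, j) (one_mem_krausSpan_zero _)
    rw [mul_one] at hmem
    have hsqrt : (Real.sqrt (a i j) : ℂ) ≠ 0 := by
      exact_mod_cast (Real.sqrt_pos.mpr (by simpa using h)).ne'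
    exact (Submodule.smul_mem_iff _ hsqrt).mp hmem
  | succ n ih =>
    obtain ⟨m, him, hmj⟩ := (pow_succ_apply_pos_iff ha _ i j).mp h
    have hmem := mul_mem_krausSpan_succ (classicalKraus a) (i, m) (ih hmj)
    rw [classicalKraus_mul_single] at hmem
    have hsqrt : (Real.sqrt (a i m) : ℂ) ≠ 0 := by exact_mod_cast (Real.sqrt_pos.mpr him).ne'
    exact (Submodule.smul_mem_iff _ hsqrt).mp hmem

theorem krausSpan_classicalKraus_eq_top_iff (ha : ∀ i j, 0 ≤ a i j) (n : ℕ) :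
    krausSpan (classicalKraus a) n = ⊤ ↔ ∀ i j, 0 < (a ^ n) i j := by
  refine ⟨pow_apply_pos_of_krausSpan_classicalKraus_eq_top ha, fun hpos => ?_⟩
  refine Submodule.eq_top_of_forall_single_mem _ fun i j => ?_
  cases n with
  | zero =>
    have hall_eq : ∀ p q : Fin D, p = q := fun p q => eq_of_one_apply_pos (pow_zero a ▸ hpos p q)
    convert one_mem_krausSpan_zero (classicalKraus a)
    ext p q
    obtain rfl := hall_eq i j
    obtain rfl := hall_eq p i
    obtain rfl := hall_eq q p
    simp
  | succ n => exact single_mem_krausSpan_classicalKraus ha (hpos i j)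

end classicalKraus

theorem stmt6_general (D : ℕ) (a : Matrix (Fin D) (Fin D) ℝ)
    (ha : ∀ i j, 0 ≤ a i j)
    (hprim : ∃ n, ∀ i j, 0 < (a ^ n) i j) :
    Primitive (fun k : Fin D × Fin D =>
        (Real.sqrt (a k.1 k.2) : ℂ) • Matrix.single k.1 k.2 (1 : ℂ))
    ∧ qIndex (fun k : Fin D × Fin D =>
        (Real.sqrt (a k.1 k.2) : ℂ) • Matrix.single k.1 k.2 (1 : ℂ))
      = sInf {n | ∀ i j, 0 < (a ^ n) i j}
    ∧ iIndex (fun k : Fin D × Fin D =>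
        (Real.sqrt (a k.1 k.2) : ℂ) • Matrix.single k.1 k.2 (1 : ℂ))
      = sInf {n | ∀ i j, 0 < (a ^ n) i j} := by
  have hq : {n | ∀ φ : Fin D → ℂ, φ ≠ 0 →
      ((krausMap (classicalKraus a))^[n] (vecMulVec φ (star φ))).PosDef} =
      {n | ∀ i j, 0 < (a ^ n) i j} :=
    Set.ext fun n => posDef_iterate_krausMap_classicalKraus_iff ha n
  have hi : {n | krausSpan (classicalKraus a) n = ⊤} = {n | ∀ i j, 0 < (a ^ n) i j} :=
    Set.ext fun n => krausSpan_classicalKraus_eq_top_iff ha n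
  obtain ⟨n, hn⟩ := hprim
  exact ⟨⟨n, (posDef_iterate_krausMap_classicalKraus_iff ha n).mpr hn⟩,
    congrArg sInf hq, congrArg sInf hi⟩

theorem stmt6 (D : ℕ) (a : Matrix (Fin D) (Fin D) ℝ)
    (ha : ∀ i j, 0 ≤ a i j) (hcol : ∀ j, ∑ i, a i j = 1)
    (hprim : ∃ n, ∀ i j, 0 < (a ^ n) i j) :
    Primitive (fun k : Fin D × Fin D =>
        (Real.sqrt (a k.1 k.2) : ℂ) • Matrix.single k.1 k.2 (1 : ℂ))
    ∧ qIndex (fun k : Fin D × Fin D =>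
        (Real.sqrt (a k.1 k.2) : ℂ) • Matrix.single k.1 k.2 (1 : ℂ))
      = sInf {n | ∀ i j, 0 < (a ^ n) i j}
    ∧ iIndex (fun k : Fin D × Fin D =>
        (Real.sqrt (a k.1 k.2) : ℂ) • Matrix.single k.1 k.2 (1 : ℂ))
      = sInf {n | ∀ i j, 0 < (a ^ n) i j} :=
  stmt6_general D a ha hprim
end
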